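/- Let d ≥ 2, let H = (V, E) be a d-sparse finite graph with d-critical cover 𝒳 satisfying |𝒳| ≥ 2, and suppose every d-critical component of H has at least d + 2 vertices. Put a_j = Σ_{U ∈ Θ_j(𝒳)} (d_𝒳(U) − 1) for 0 ≤ j ≤ d. Then for every 0 ≤ k ≤ d − 2 we have (d − k) a_{k+1} − (k + 1) a_{k+2} < binom(d+1, k+2) · (|𝒳| − 1). -/

import Mathlib

/-!
A critical component `X` is tight, `i(X) + (d+1 choose 2) = d|X|`, while the union of two or more
components is not, since it would be a larger critical subgraph. Fix a `k`-hinge `S` and apply this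
to the components containing `S`: counting the vertices and edges of their union according to how
they meet `S` bounds the excesses `d_𝒳(U) - 1` of the `(k+1)`-hinges `U ⊇ S` in terms of those of
the `(k+2)`-hinges. Summed over `Θ_k` this is the recurrence
`(d - k)(k + 1) a_{k+1} + |Θ_k| ≤ (d-k+1 choose 2) a_k + (k+2 choose 2) a_{k+2}`,
and the claim follows by induction on `k`, starting from `a_0 = |𝒳| - 1`.
-/

open Finset
open scoped Classical

variable {α : Type*} [DecidableEq α]

/-- The set of edges of `E` with both endpoints in `X`. -/
noncomputable def inducedEdges (E : Finset (Sym2 α)) (X : Finset α) : Finset (Sym2 α) :=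
  E.filter fun e => ∀ v ∈ e, v ∈ X

/-- `i_G(X)`: the number of edges of `E` with both endpoints in `X`. -/
noncomputable def iG (E : Finset (Sym2 α)) (X : Finset α) : ℕ :=
  (inducedEdges E X).card

/-- `E` is a valid edge set on the vertex set `V`: edges are loopless and join vertices of `V`. -/
def ValidOn (V : Finset α) (E : Finset (Sym2 α)) : Prop :=
  ∀ e ∈ E, ¬ e.IsDiag ∧ ∀ v ∈ e, v ∈ V

/-- The graph `(V, E)` is `d`-sparse: every `X ⊆ V` with `|X| ≥ d` satisfies
`i(X) ≤ d|X| - (d+1 choose 2)`. -/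
noncomputable def Sparse (d : ℕ) (V : Finset α) (E : Finset (Sym2 α)) : Prop :=
  ∀ X ⊆ V, d ≤ X.card → iG E X + Nat.choose (d + 1) 2 ≤ d * X.card

/-- `(U, F)` is a subgraph of `(V, E)`. -/
def IsSubgraph (V : Finset α) (E : Finset (Sym2 α)) (U : Finset α) (F : Finset (Sym2 α)) :
    Prop :=
  U ⊆ V ∧ F ⊆ E ∧ ∀ e ∈ F, ∀ v ∈ e, v ∈ U

/-- The graph `(U, F)` is `d`-critical: either `|U| = 2` and `|F| = 1`, or `|U| ≥ d + 2` and
`|F| = d|U| - (d+1 choose 2)`. -/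
def Critical (d : ℕ) (U : Finset α) (F : Finset (Sym2 α)) : Prop :=
  (U.card = 2 ∧ F.card = 1) ∨
  (d + 2 ≤ U.card ∧ F.card + Nat.choose (d + 1) 2 = d * U.card)

/-- `(U, F)` is a `d`-critical subgraph of `(V, E)`. -/
def CritSubgraph (d : ℕ) (V : Finset α) (E : Finset (Sym2 α)) (U : Finset α)
    (F : Finset (Sym2 α)) : Prop :=
  IsSubgraph V E U F ∧ Critical d U F

/-- `(U, F)` is a `d`-critical component of `(V, E)`: a `d`-critical subgraph not properly
contained in any other `d`-critical subgraph. -/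
def CritComponent (d : ℕ) (V : Finset α) (E : Finset (Sym2 α)) (U : Finset α)
    (F : Finset (Sym2 α)) : Prop :=
  CritSubgraph d V E U F ∧
  ∀ U' F', CritSubgraph d V E U' F' → U ⊆ U' → F ⊆ F' → U = U' ∧ F = F'

/-- The `d`-critical cover of `(V, E)`: the family of vertex sets of its `d`-critical
components. -/
noncomputable def critCover (d : ℕ) (V : Finset α) (E : Finset (Sym2 α)) :
    Finset (Finset α) :=
  V.powerset.filter fun U => ∃ F, CritComponent d V E U F

/-- `d_𝒳(W)`: the number of members of the family `𝒳` containing `W`. -/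
def degX (𝒳 : Finset (Finset α)) (W : Finset α) : ℕ :=
  (𝒳.filter fun X => W ⊆ X).card

/-- `Θ_k(𝒳)`: the set of `k`-hinges of `𝒳`, i.e. `k`-element subsets of `V` lying in at least
two members of `𝒳`.  (For `k = 0` this is `{∅}` exactly when `|𝒳| ≥ 2`.) -/
noncomputable def theta (V : Finset α) (𝒳 : Finset (Finset α)) (k : ℕ) :
    Finset (Finset α) :=
  V.powerset.filter fun W => W.card = k ∧ 2 ≤ degX 𝒳 W

/-- `𝒳` is a cover of `(V, E)`: every member has at least two vertices and every edge is
induced by some member. -/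
def IsCover (E : Finset (Sym2 α)) (𝒳 : Finset (Finset α)) : Prop :=
  (∀ X ∈ 𝒳, 2 ≤ X.card) ∧ ∀ e ∈ E, ∃ X ∈ 𝒳, ∀ v ∈ e, v ∈ X

/-- `𝒳` is `t`-thin: any two distinct members intersect in at most `t` vertices. -/
def Thin (t : ℕ) (𝒳 : Finset (Finset α)) : Prop :=
  ∀ X ∈ 𝒳, ∀ Y ∈ 𝒳, X ≠ Y → (X ∩ Y).card ≤ t

/-- `(V, F)` is a maximal `d`-sparse (spanning) subgraph of `(V, E)`. -/
noncomputable def MaxSparse (d : ℕ) (V : Finset α) (E F : Finset (Sym2 α)) : Prop :=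
  F ⊆ E ∧ Sparse d V F ∧ ∀ e ∈ E, e ∉ F → ¬ Sparse d V (insert e F)

theorem Sym2.toFinset_injective {β : Type*} [DecidableEq β] :
    Function.Injective (Sym2.toFinset : Sym2 β → Finset β) := fun e e' h =>
  Sym2.ext fun x => by rw [← Sym2.mem_toFinset, h, Sym2.mem_toFinset]

theorem sum_card_eq_sum_card_filter_mem {β γ : Type*} [DecidableEq γ] (𝒴 : Finset β)
    (f : β → Finset γ) : ∑ X ∈ 𝒴, #(f X) = ∑ x ∈ 𝒴.sup f, #{X ∈ 𝒴 | x ∈ f X} := by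
  calc ∑ X ∈ 𝒴, #(f X) = ∑ X ∈ 𝒴, #{x ∈ 𝒴.sup f | x ∈ f X} :=
        sum_congr rfl fun X hX => by rw [filter_mem_eq_inter, inter_eq_right.2 (le_sup hX)]
    _ = _ := by simp only [card_eq_sum_ones, sum_filter]; exact sum_comm

theorem sum_le_mul_sum_of_card_fiber_le {β γ : Type*} [DecidableEq γ] {A : Finset β}
    {B : Finset γ} {g : β → γ} {w : β → ℤ} {ω : γ → ℤ} {m : ℕ}
    (hw : ∀ e ∈ A, g e ∈ B → w e ≤ ω (g e)) (hw' : ∀ e ∈ A, g e ∉ B → w e ≤ 0)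
    (hfiber : ∀ c ∈ B, #{e ∈ A | g e = c} ≤ m) (hω : ∀ c ∈ B, 0 ≤ ω c) :
    ∑ e ∈ A, w e ≤ m * ∑ c ∈ B, ω c := by
  calc ∑ e ∈ A, w e ≤ ∑ e ∈ A with g e ∈ B, ω (g e) := by
        rw [sum_filter]
        refine sum_le_sum fun e he => ?_
        split_ifs with h
        exacts [hw e he h, hw' e he h]
    _ = ∑ c ∈ B, #{e ∈ A | g e = c} * ω c := by
        rw [← sum_fiberwise_of_maps_to (g := g) (t := B) (fun e he => (mem_filter.1 he).2)]
        refine sum_congr rfl fun c hc => ?_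
        rw [filter_filter, filter_congr fun e _ => and_iff_right_of_imp fun h => h ▸ hc,
          sum_congr rfl fun e he => by rw [(mem_filter.1 he).2], sum_const, nsmul_eq_mul]
    _ ≤ ∑ c ∈ B, m * ω c :=
        sum_le_sum fun c hc => mul_le_mul_of_nonneg_right (by exact_mod_cast hfiber c hc) (hω c hc)
    _ = m * ∑ c ∈ B, ω c := (mul_sum _ _ _).symm

section CriticalComponent

variable {β : Type*} {d : ℕ} {V : Finset β} {E : Finset (Sym2 β)} {U : Finset β}
  {F : Finset (Sym2 β)}

theorem inducedEdges_mono {X Y : Finset β} (h : X ⊆ Y) : inducedEdges E X ⊆ inducedEdges E Y :=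
  fun _ he => mem_filter.2 ⟨(mem_filter.1 he).1, fun v hv => h ((mem_filter.1 he).2 v hv)⟩

theorem mem_critCover {X : Finset β} :
    X ∈ critCover d V E ↔ X ⊆ V ∧ ∃ F, CritComponent d V E X F := by
  simp [critCover]

theorem Critical.card_add_choose_eq (h : Critical d U F) (hd : 0 < d) (hU : d + 2 ≤ #U) :
    #F + (d + 1).choose 2 = d * #U := by
  rcases h with ⟨h2, -⟩ | ⟨-, h⟩
  · omega
  · exact h

theorem CritComponent.eq_inducedEdges (hc : CritComponent d V E U F) (hd : 0 < d)
    (hsp : Sparse d V E) (hU : d + 2 ≤ #U) : F = inducedEdges E U := by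
  obtain ⟨⟨⟨hUV, hFE, hFU⟩, hcrit⟩, -⟩ := hc
  refine eq_of_subset_of_card_le (fun e he => mem_filter.2 ⟨hFE he, hFU e he⟩) ?_
  have hsparse := hsp U hUV (by omega)
  have htight := hcrit.card_add_choose_eq hd hU
  rw [iG] at hsparse
  omega

theorem CritComponent.iG_add_choose_eq (hc : CritComponent d V E U F) (hd : 0 < d)
    (hsp : Sparse d V E) (hU : d + 2 ≤ #U) : iG E U + (d + 1).choose 2 = d * #U := by
  rw [iG, ← hc.eq_inducedEdges hd hsp hU]
  exact hc.1.2.card_add_choose_eq hd hU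

end CriticalComponent

theorem iG_sup_add_choose_lt {d : ℕ} {V : Finset α} {E : Finset (Sym2 α)} (hd : 0 < d)
    (hsp : Sparse d V E)
    (hbig : ∀ U F, CritComponent d V E U F → d + 2 ≤ #U) {𝒴 : Finset (Finset α)}
    (h𝒴 : 𝒴 ⊆ critCover d V E) (h𝒴2 : 1 < #𝒴) :
    iG E (𝒴.sup id) + (d + 1).choose 2 < d * #(𝒴.sup id) := by
  obtain ⟨Y₀, h₀, Y₁, h₁, hne⟩ := one_lt_card.1 h𝒴2
  set W := 𝒴.sup id
  have hWV : W ⊆ V := Finset.sup_le fun X hX => (mem_critCover.1 (h𝒴 hX)).1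
  obtain ⟨F₀, hc₀⟩ := (mem_critCover.1 (h𝒴 h₀)).2
  obtain ⟨F₁, hc₁⟩ := (mem_critCover.1 (h𝒴 h₁)).2
  have hW : d + 2 ≤ #W := (hbig _ _ hc₀).trans (card_le_card (le_sup (f := id) h₀))
  refine (hsp W hWV (by omega)).lt_of_ne fun htight => hne ?_
  have hcrit : CritSubgraph d V E W (inducedEdges E W) :=
    ⟨⟨hWV, filter_subset _ _, fun e he => (mem_filter.1 he).2⟩, Or.inr ⟨hW, htight⟩⟩
  have heqW : ∀ Y ∈ 𝒴, ∀ F, CritComponent d V E Y F → Y = W := fun Y hY F hc =>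
    (hc.2 W _ hcrit (le_sup (f := id) hY) <| by
      rw [hc.eq_inducedEdges hd hsp (hbig _ _ hc)]
      exact inducedEdges_mono (le_sup (f := id) hY)).1
  rw [heqW _ h₀ _ hc₀, heqW _ h₁ _ hc₁]

structure IsTightFamily (d : ℕ) (E : Finset (Sym2 α)) (𝒳 : Finset (Finset α)) : Prop where
  iG_add_choose_eq : ∀ X ∈ 𝒳, iG E X + (d + 1).choose 2 = d * #X
  iG_sup_add_choose_lt :
    ∀ 𝒴 ⊆ 𝒳, 1 < #𝒴 → iG E (𝒴.sup id) + (d + 1).choose 2 < d * #(𝒴.sup id)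

theorem isTightFamily_critCover {d : ℕ} {V : Finset α} {E : Finset (Sym2 α)} (hd : 0 < d)
    (hsp : Sparse d V E) (hbig : ∀ U F, CritComponent d V E U F → d + 2 ≤ #U) :
    IsTightFamily d E (critCover d V E) where
  iG_add_choose_eq X hX := by
    obtain ⟨F, hc⟩ := (mem_critCover.1 hX).2
    exact hc.iG_add_choose_eq hd hsp (hbig _ _ hc)
  iG_sup_add_choose_lt _ h𝒴 h𝒴2 := iG_sup_add_choose_lt hd hsp hbig h𝒴 h𝒴2

section Hinges

variable {V : Finset α} {𝒳 : Finset (Finset α)}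

theorem mem_theta {W : Finset α} {k : ℕ} :
    W ∈ theta V 𝒳 k ↔ W ⊆ V ∧ #W = k ∧ 2 ≤ degX 𝒳 W := by
  simp [theta]

theorem degX_anti {S U : Finset α} (h : S ⊆ U) : degX 𝒳 U ≤ degX 𝒳 S :=
  card_le_card (monotone_filter_right _ fun _ _ hU => h.trans hU)

theorem degX_empty : degX 𝒳 ∅ = #𝒳 := by
  simp [degX]

theorem theta_zero (h𝒳 : 2 ≤ #𝒳) : theta V 𝒳 0 = {∅} := by
  ext W
  simp only [mem_theta, card_eq_zero, mem_singleton]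
  exact ⟨fun h => h.2.1, fun h => ⟨h ▸ empty_subset V, h, h ▸ degX_empty (𝒳 := 𝒳) ▸ h𝒳⟩⟩

theorem filter_theta_subset {U : Finset α} {j : ℕ} (hU : U ∈ theta V 𝒳 j) (k : ℕ) :
    {S ∈ theta V 𝒳 k | S ⊆ U} = U.powersetCard k := by
  obtain ⟨hUV, -, hU2⟩ := mem_theta.1 hU
  ext S
  simp only [mem_filter, mem_theta, mem_powersetCard]
  exact ⟨fun ⟨⟨_, hS, _⟩, hSU⟩ => ⟨hSU, hS⟩,
    fun ⟨hSU, hS⟩ => ⟨⟨hSU.trans hUV, hS, hU2.trans (degX_anti hSU)⟩, hSU⟩⟩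

theorem filter_theta_superset_self {S : Finset α} {k : ℕ} (hS : S ∈ theta V 𝒳 k) :
    {U ∈ theta V 𝒳 k | S ⊆ U} = {S} := by
  ext U
  simp only [mem_filter, mem_singleton]
  refine ⟨fun ⟨hU, hSU⟩ => (eq_of_subset_of_card_le hSU ?_).symm, fun h => ⟨h ▸ hS, h ▸ subset_rfl⟩⟩
  rw [(mem_theta.1 hU).2.1, (mem_theta.1 hS).2.1]

theorem sum_theta_sum_filter_superset (f : Finset α → ℤ) (j k : ℕ) :
    ∑ S ∈ theta V 𝒳 k, ∑ U ∈ theta V 𝒳 j with S ⊆ U, f U =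
      j.choose k * ∑ U ∈ theta V 𝒳 j, f U := by
  rw [sum_comm' (t' := theta V 𝒳 j) (s' := fun U => {S ∈ theta V 𝒳 k | S ⊆ U})
    (fun S U => by simp only [mem_filter]; tauto), mul_sum]
  refine sum_congr rfl fun U hU => ?_
  rw [sum_const, filter_theta_subset hU, card_powersetCard, (mem_theta.1 hU).2.1, nsmul_eq_mul]

end Hinges

section CountingAroundHinge

variable {V : Finset α} {E : Finset (Sym2 α)} {𝒳 : Finset (Finset α)} {S : Finset α} {k : ℕ}

theorem card_filter_mem_eq_degX_insert (S : Finset α) (v : α) :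
    #{X ∈ {X ∈ 𝒳 | S ⊆ X} | v ∈ X} = degX 𝒳 (insert v S) := by
  rw [degX, filter_filter]
  simp only [insert_subset_iff, and_comm]

theorem card_filter_mem_inducedEdges_eq_degX {e : Sym2 α} (he : e ∈ E) (S : Finset α) :
    #{X ∈ {X ∈ 𝒳 | S ⊆ X} | e ∈ inducedEdges E X} = degX 𝒳 (S ∪ e.toFinset) := by
  rw [degX, filter_filter]
  congr 1
  refine filter_congr fun X _ => ?_
  simp only [inducedEdges, mem_filter, he, true_and, union_subset_iff]
  exact and_congr_right' ⟨fun h v hv => h v (Sym2.mem_toFinset.1 hv),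
    fun h v hv => h (Sym2.mem_toFinset.2 hv)⟩

theorem le_sum_degX_insert_sub_one (hS : S ∈ theta V 𝒳 k) :
    (k : ℤ) * (degX 𝒳 S - 1) + ∑ U ∈ theta V 𝒳 (k + 1) with S ⊆ U, ((degX 𝒳 U : ℤ) - 1) ≤
      ∑ v ∈ {X ∈ 𝒳 | S ⊆ X}.sup id, ((degX 𝒳 (insert v S) : ℤ) - 1) := by
  set W := {X ∈ 𝒳 | S ⊆ X}.sup id
  have hsupport : ∀ U, 1 ≤ degX 𝒳 U → S ⊆ U → U ⊆ W := fun U hU hSU => by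
    obtain ⟨X, hX⟩ := card_pos.1 hU
    obtain ⟨hX𝒳, hUX⟩ := mem_filter.1 hX
    exact hUX.trans (le_sup (f := id) (mem_filter.2 ⟨hX𝒳, hSU.trans hUX⟩))
  have hSW : S ⊆ W := hsupport S (by linarith [(mem_theta.1 hS).2.2]) subset_rfl
  have hS_part : ∑ v ∈ S, ((degX 𝒳 (insert v S) : ℤ) - 1) = k * (degX 𝒳 S - 1) := by
    rw [sum_congr rfl fun v hv => by rw [insert_eq_of_mem hv], sum_const,
      (mem_theta.1 hS).2.1, nsmul_eq_mul]
  rw [← sum_sdiff hSW, hS_part, add_comm]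
  gcongr
  have hinsert_inj : Set.InjOn (insert · S) ↑(W \ S) := fun v hv w _ h => by
    have hvw : v ∈ insert w S := by
      rw [← show insert v S = insert w S from h]
      exact mem_insert_self v S
    exact (mem_insert.1 hvw).resolve_right (mem_sdiff.1 (mem_coe.1 hv)).2
  rw [← sum_image (f := fun U => ((degX 𝒳 U : ℤ) - 1)) hinsert_inj]
  refine sum_le_sum_of_subset_of_nonneg (fun U hU => ?_) fun U hU _ => ?_
  · obtain ⟨hU, hSU⟩ := mem_filter.1 hU
    obtain ⟨hUV, hUcard, hU2⟩ := mem_theta.1 hU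
    have hScard := (mem_theta.1 hS).2.1
    obtain ⟨v, hv⟩ := card_eq_one.1 (by rw [card_sdiff_of_subset hSU]; omega :
      #(U \ S) = 1)
    have hvU : v ∈ U \ S := hv ▸ mem_singleton_self v
    refine mem_image.2 ⟨v, mem_sdiff.2 ⟨hsupport U (by omega) hSU (mem_sdiff.1 hvU).1,
      (mem_sdiff.1 hvU).2⟩, ?_⟩
    rw [← union_sdiff_of_subset hSU, hv, union_comm, ← insert_eq]
  · obtain ⟨v, hv, rfl⟩ := mem_image.1 hU
    rw [← card_filter_mem_eq_degX_insert]
    have : 0 < #{X ∈ {X ∈ 𝒳 | S ⊆ X} | v ∈ X} := by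
      obtain ⟨X, hX, hvX⟩ := mem_sup.1 (mem_sdiff.1 hv).1
      exact card_pos.2 ⟨X, mem_filter.2 ⟨hX, hvX⟩⟩
    omega

/-- An edge `e` with `j` endpoints outside `S` is determined by `S ∪ e` and its `2 - j` endpoints
in `S`, whence the factor `(k choose 2 - j)`. -/
theorem sum_filter_card_toFinset_sdiff_le (hval : ValidOn V E) {A : Finset (Sym2 α)}
    (hA : A ⊆ E) (hSV : S ⊆ V) (hS : #S = k) {j : ℕ} (hj : j ≤ 2) :
    ∑ e ∈ A with #(e.toFinset \ S) = j, ((degX 𝒳 (S ∪ e.toFinset) : ℤ) - 1) ≤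
      k.choose (2 - j) * ∑ U ∈ theta V 𝒳 (k + j) with S ⊆ U, ((degX 𝒳 U : ℤ) - 1) := by
  have hcard : ∀ e ∈ A, #e.toFinset = 2 := fun e he =>
    Sym2.card_toFinset_of_not_isDiag e (hval e (hA he)).1
  have hunion : ∀ e ∈ A, #(e.toFinset \ S) = j → S ∪ e.toFinset ⊆ V ∧ #(S ∪ e.toFinset) = k + j :=
    fun e he hej => ⟨union_subset hSV fun v hv => (hval e (hA he)).2 v (Sym2.mem_toFinset.1 hv),
      by rw [union_comm, ← card_sdiff_add_card, hej, hS, add_comm]⟩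
  refine sum_le_mul_sum_of_card_fiber_le (A := {e ∈ A | #(e.toFinset \ S) = j})
    (B := {U ∈ theta V 𝒳 (k + j) | S ⊆ U}) (g := fun e => S ∪ e.toFinset)
    (w := fun e => (degX 𝒳 (S ∪ e.toFinset) : ℤ) - 1) (ω := fun U => (degX 𝒳 U : ℤ) - 1)
    (fun _ _ _ => le_rfl) (fun e he hU => ?_) (fun U _ => ?_) (fun U hU => ?_)
  · obtain ⟨he, hej⟩ := mem_filter.1 he
    obtain ⟨hUV, hUcard⟩ := hunion e he hej
    have : degX 𝒳 (S ∪ e.toFinset) < 2 := by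
      by_contra h
      exact hU (mem_filter.2 ⟨mem_theta.2 ⟨hUV, hUcard, by omega⟩, subset_union_left⟩)
    omega
  · rw [← hS, ← card_powersetCard]
    refine card_le_card_of_injOn (fun e => e.toFinset ∩ S) (fun e he => ?_)
      (fun e he e' he' h => ?_)
    · obtain ⟨⟨heA, hej⟩, -⟩ := mem_filter.1 he |>.imp_left mem_filter.1
      show e.toFinset ∩ S ∈ S.powersetCard (2 - j)
      rw [mem_powersetCard]
      refine ⟨inter_subset_right, ?_⟩
      have := card_inter_add_card_sdiff e.toFinset S
      have := hcard e heA
      omega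
    · rw [mem_coe, mem_filter] at he he'
      apply Sym2.toFinset_injective
      have hU : S ∪ e.toFinset = S ∪ e'.toFinset := he.2.trans he'.2.symm
      rw [← sdiff_union_inter e.toFinset S, ← sdiff_union_inter e'.toFinset S,
        ← union_sdiff_left S e.toFinset, ← union_sdiff_left S e'.toFinset, hU,
        show e.toFinset ∩ S = e'.toFinset ∩ S from h]
  · have := (mem_theta.1 (mem_filter.1 hU).1).2.2
    omega

theorem sum_degX_union_toFinset_le (hval : ValidOn V E) {A : Finset (Sym2 α)} (hA : A ⊆ E)
    (hS : S ∈ theta V 𝒳 k) :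
    ∑ e ∈ A, ((degX 𝒳 (S ∪ e.toFinset) : ℤ) - 1) ≤
      k.choose 2 * ((degX 𝒳 S : ℤ) - 1) +
        k * ∑ U ∈ theta V 𝒳 (k + 1) with S ⊆ U, ((degX 𝒳 U : ℤ) - 1) +
        ∑ U ∈ theta V 𝒳 (k + 2) with S ⊆ U, ((degX 𝒳 U : ℤ) - 1) := by
  obtain ⟨hSV, hScard, -⟩ := mem_theta.1 hS
  have hbound := fun j (hj : j ≤ 2) =>
    sum_filter_card_toFinset_sdiff_le (𝒳 := 𝒳) hval hA hSV hScard hj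
  have h0 := hbound 0 (by norm_num)
  rw [add_zero, filter_theta_superset_self hS, sum_singleton] at h0
  have h1 := hbound 1 (by norm_num)
  have h2 := hbound 2 le_rfl
  simp only [Nat.sub_zero, Nat.sub_self, show 2 - 1 = 1 from rfl, Nat.choose_one_right,
    Nat.choose_zero_right, Nat.cast_one, one_mul] at h0 h1 h2
  rw [← sum_fiberwise_of_maps_to (g := fun e => #(e.toFinset \ S)) (t := range 3)
    fun e he => mem_range.2 (Nat.lt_succ_of_le ((card_le_card sdiff_subset).trans
      (Sym2.card_toFinset_of_not_isDiag e (hval e (hA he)).1).le))]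
  simp only [sum_range_succ, sum_range_zero, zero_add]
  linarith

theorem tight_family_double_count {d : ℕ} {𝒴 : Finset (Finset α)}
    (h𝒴 : ∀ X ∈ 𝒴, iG E X + (d + 1).choose 2 = d * #X) :
    (d : ℤ) * (∑ v ∈ 𝒴.sup id, ((#{X ∈ 𝒴 | v ∈ X} : ℤ) - 1) + #(𝒴.sup id)) =
      ∑ e ∈ 𝒴.sup (inducedEdges E), ((#{X ∈ 𝒴 | e ∈ inducedEdges E X} : ℤ) - 1) +
        #(𝒴.sup (inducedEdges E)) + (d + 1).choose 2 * #𝒴 := by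
  simp only [sum_sub_distrib, sum_const, nsmul_eq_mul, mul_one, sub_add_cancel]
  have hvert := sum_card_eq_sum_card_filter_mem 𝒴 id
  have hedge := sum_card_eq_sum_card_filter_mem 𝒴 (inducedEdges E)
  simp only [id] at hvert
  have : d * ∑ X ∈ 𝒴, #X = ∑ X ∈ 𝒴, iG E X + (d + 1).choose 2 * #𝒴 := by
    rw [mul_sum, ← sum_congr rfl h𝒴, sum_add_distrib, sum_const, smul_eq_mul, mul_comm]
  simp only [iG] at this
  rw [hvert, hedge] at this
  exact_mod_cast this

theorem choose_two_add_choose_succ_two {d k : ℕ} (hk : k ≤ d) :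
    k.choose 2 + (d + 1).choose 2 = (d - k + 1).choose 2 + d * k := by
  obtain ⟨m, rfl⟩ := Nat.exists_eq_add_of_le hk
  rw [show k + m - k + 1 = m + 1 by omega]
  qify
  simp only [Nat.cast_choose_two]
  push_cast
  ring

theorem IsTightFamily.hinge_bound {d : ℕ} (h𝒳 : IsTightFamily d E 𝒳) (hval : ValidOn V E)
    (hS : S ∈ theta V 𝒳 k) (hk : k ≤ d) :
    ((d : ℤ) - k) * ∑ U ∈ theta V 𝒳 (k + 1) with S ⊆ U, ((degX 𝒳 U : ℤ) - 1) + 1 ≤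
      (d - k + 1).choose 2 * ((degX 𝒳 S : ℤ) - 1) +
        ∑ U ∈ theta V 𝒳 (k + 2) with S ⊆ U, ((degX 𝒳 U : ℤ) - 1) := by
  have h𝔈E : {X ∈ 𝒳 | S ⊆ X}.sup (inducedEdges E) ⊆ E := Finset.sup_le fun X _ => filter_subset _ _
  have hcount := tight_family_double_count (E := E) (𝒴 := {X ∈ 𝒳 | S ⊆ X})
    fun X hX => h𝒳.iG_add_choose_eq X (mem_filter.1 hX).1
  simp only [card_filter_mem_eq_degX_insert] at hcount
  rw [sum_congr (s₁ := {X ∈ 𝒳 | S ⊆ X}.sup (inducedEdges E)) rfl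
    (g := fun e => ((degX 𝒳 (S ∪ e.toFinset) : ℤ) - 1))
    fun e he => by rw [card_filter_mem_inducedEdges_eq_degX (h𝔈E he)]] at hcount
  have hstrict := h𝒳.iG_sup_add_choose_lt _ (filter_subset _ _) (mem_theta.1 hS).2.2
  have h𝔈W : #({X ∈ 𝒳 | S ⊆ X}.sup (inducedEdges E)) ≤ iG E ({X ∈ 𝒳 | S ⊆ X}.sup id) :=
    card_le_card (Finset.sup_le fun X hX => inducedEdges_mono (le_sup (f := id) hX))
  have hvert := mul_le_mul_of_nonneg_left (le_sum_degX_insert_sub_one hS) (Nat.cast_nonneg d)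
  have hedge := sum_degX_union_toFinset_le hval h𝔈E hS
  have hchoose := congrArg (fun n : ℕ => (n : ℤ) * ((degX 𝒳 S : ℤ) - 1))
    (choose_two_add_choose_succ_two hk)
  have hdegS : (#{X ∈ 𝒳 | S ⊆ X} : ℤ) = degX 𝒳 S := rfl
  zify at hstrict h𝔈W
  push_cast at hchoose hcount
  rw [hdegS] at hcount
  linarith

noncomputable def hingeExcess (V : Finset α) (𝒳 : Finset (Finset α)) (j : ℕ) : ℤ :=
  ∑ U ∈ theta V 𝒳 j, ((degX 𝒳 U : ℤ) - 1)

theorem IsTightFamily.hingeExcess_recurrence {d : ℕ} (h𝒳 : IsTightFamily d E 𝒳)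
    (hval : ValidOn V E) (hk : k ≤ d) :
    ((d : ℤ) - k) * (k + 1) * hingeExcess V 𝒳 (k + 1) + #(theta V 𝒳 k) ≤
      (d - k + 1).choose 2 * hingeExcess V 𝒳 k +
        (k + 2).choose 2 * hingeExcess V 𝒳 (k + 2) := by
  have hsum := sum_le_sum fun S hS => h𝒳.hinge_bound hval hS hk
  simp only [sum_add_distrib, ← mul_sum, sum_theta_sum_filter_superset, sum_const,
    nsmul_eq_mul, mul_one] at hsum
  rw [Nat.choose_succ_self_right, Nat.choose_symm_add] at hsum
  unfold hingeExcess
  push_cast at hsum ⊢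
  linarith

end CountingAroundHinge

theorem two_mul_choose_two (n : ℕ) : 2 * (n.choose 2 : ℤ) = n * (n - 1) := by
  qify
  rw [Nat.cast_choose_two]
  ring

/-- The inequality at `k + 1` is `d - k - 1` times the one at `k` plus twice the recurrence at
`k + 1`, divided by `k + 3`: the terms in `a (k + 1)` cancel. -/
theorem sub_lt_choose_mul_of_recurrence {d : ℕ} {a : ℕ → ℤ} {M : ℤ}
    (hrec : ∀ k, k + 2 ≤ d → ((d : ℤ) - k) * (k + 1) * a (k + 1) ≤
      (d - k + 1).choose 2 * a k + (k + 2).choose 2 * a (k + 2))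
    (h₀ : (d : ℤ) * a 1 - a 2 < (d + 1).choose 2 * M) :
    ∀ k, k + 2 ≤ d → ((d : ℤ) - k) * a (k + 1) - (k + 1) * a (k + 2) < (d + 1).choose (k + 2) * M
  | 0, _ => by simpa using h₀
  | k + 1, hk => by
    obtain ⟨m, rfl⟩ := Nat.exists_eq_add_of_le hk
    have ih := sub_lt_choose_mul_of_recurrence hrec h₀ k (by omega)
    have hrec' := hrec (k + 1) hk
    rw [show k + 1 + 2 + m - (k + 1) + 1 = m + 3 by omega] at hrec'
    have hpascal : ((k + 1 + 2 + m + 1).choose (k + 1 + 2) : ℤ) * (k + 3) =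
        (k + 1 + 2 + m + 1).choose (k + 2) * (m + 2) := by
      have := Nat.choose_succ_right_eq (k + 1 + 2 + m + 1) (k + 2)
      rw [show k + 1 + 2 + m + 1 - (k + 2) = m + 2 by omega] at this
      exact_mod_cast this
    have h₁ := congrArg (· * a (k + 1)) (two_mul_choose_two (m + 3))
    have h₂ := congrArg (· * a (k + 1 + 2)) (two_mul_choose_two (k + 1 + 2))
    have h₃ := congrArg (· * M) hpascal
    have ih' := mul_lt_mul_of_pos_left ih (by positivity : (0 : ℤ) < m + 2)
    refine lt_of_mul_lt_mul_left (a := (k : ℤ) + 3) ?_ (by positivity)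
    push_cast at *
    linarith

theorem hingeExcess_zero {V : Finset α} {𝒳 : Finset (Finset α)} (h𝒳 : 2 ≤ #𝒳) :
    hingeExcess V 𝒳 0 = #𝒳 - 1 := by
  rw [hingeExcess, theta_zero h𝒳, sum_singleton, degX_empty]

/-- Lemma 3.3(b) of the paper. -/
theorem stmt7 (d k : ℕ) (hd : 2 ≤ d) (hk : k ≤ d - 2)
    (V : Finset α) (E : Finset (Sym2 α)) (hval : ValidOn V E) (hsp : Sparse d V E)
    (𝒳 : Finset (Finset α)) (h𝒳 : 𝒳 = critCover d V E) (h𝒳2 : 2 ≤ 𝒳.card)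
    (hbig : ∀ U F, CritComponent d V E U F → d + 2 ≤ U.card)
    (a : ℕ → ℤ) (ha : ∀ j ≤ d, a j = ∑ U ∈ theta V 𝒳 j, ((degX 𝒳 U : ℤ) - 1)) :
    ((d : ℤ) - k) * a (k + 1) - ((k : ℤ) + 1) * a (k + 2) <
      (Nat.choose (d + 1) (k + 2) : ℤ) * ((𝒳.card : ℤ) - 1) := by
  have h𝒳T : IsTightFamily d E 𝒳 := h𝒳 ▸ isTightFamily_critCover (by omega) hsp hbig
  have hrec := fun j (hj : j ≤ d) => h𝒳T.hingeExcess_recurrence hval hj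
  have h₀ := hrec 0 (by omega)
  rw [theta_zero h𝒳2, hingeExcess_zero h𝒳2] at h₀
  simp only [Nat.cast_zero, sub_zero, zero_add, mul_one, card_singleton, Nat.sub_zero,
    Nat.choose_self, Nat.cast_one, one_mul] at h₀
  rw [ha (k + 1) (by omega), ha (k + 2) (by omega)]
  refine sub_lt_choose_mul_of_recurrence (a := hingeExcess V 𝒳)
    (fun j hj => (le_add_of_nonneg_right (Nat.cast_nonneg _)).trans (hrec j (by omega)))
    (by linarith) k (by omega)
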